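/- Derivability of focussed sequents via one-step synchronous phase is equivalent to derivability in small-step LKF: ⊢ Θ ⇓ A is derivable in LKF if and only if there exists a positive decomposition Γ ⊩⁺ A such that ⊢ Θ ⇑ N is derivable for every negative N ∈ Γ and ā ∈ Θ for every positive atom a ∈ Γ. -/
import Mathlib


/-- Polarised classical formulae: positive/negative atoms, and
positive (`andP`,`orP`) and negative (`andN`,`orN`) connectives. -/
inductive PForm (At : Type) : Type
  | pos : At → PForm At
  | neg : At → PForm At
  | andP : PForm At → PForm At → PForm At
  | orP : PForm At → PForm At → PForm At
  | andN : PForm At → PForm At → PForm At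
  | orN : PForm At → PForm At → PForm At
  deriving DecidableEq

namespace PForm

/-- Involutive negation on polarised formulae. -/
def pneg {At : Type} : PForm At → PForm At
  | .pos a => .neg a
  | .neg a => .pos a
  | .andP A B => .orN A.pneg B.pneg
  | .orP A B => .andN A.pneg B.pneg
  | .andN A B => .orP A.pneg B.pneg
  | .orN A B => .andP A.pneg B.pneg

/-- `A` is a positive formula. -/
def isPos {At : Type} : PForm At → Prop
  | .pos _ => True
  | .andP _ _ => True
  | .orP _ _ => True
  | _ => False

/-- `A` is a negative formula. -/
def isNeg {At : Type} : PForm At → Prop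
  | .neg _ => True
  | .andN _ _ => True
  | .orN _ _ => True
  | _ => False

end PForm
/-- Positive decomposition relation `Γ ⊩⁺ A` on multisets of formulae. -/
inductive DecP {At : Type} : Multiset (PForm At) → PForm At → Prop
  | shift {N : PForm At} : N.isNeg → DecP {N} N
  | atom (a : At) : DecP {PForm.pos a} (.pos a)
  | andP {Γ₁ Γ₂ : Multiset (PForm At)} {A₁ A₂ : PForm At} :
      DecP Γ₁ A₁ → DecP Γ₂ A₂ → DecP (Γ₁ + Γ₂) (.andP A₁ A₂)
  | orP₁ {Γ : Multiset (PForm At)} {A₁ A₂ : PForm At} :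
      DecP Γ A₁ → DecP Γ (.orP A₁ A₂)
  | orP₂ {Γ : Multiset (PForm At)} {A₁ A₂ : PForm At} :
      DecP Γ A₂ → DecP Γ (.orP A₁ A₂)
mutual
/-- Focussed sequents `⊢ Θ ⇓ A` of Liang–Miller's LKF. -/
inductive FocS {At : Type} : Multiset (PForm At) → PForm At → Prop
  | andP {Θ : Multiset (PForm At)} {A₁ A₂ : PForm At} :
      FocS Θ A₁ → FocS Θ A₂ → FocS Θ (.andP A₁ A₂)
  | orP₁ {Θ : Multiset (PForm At)} {A₁ A₂ : PForm At} :
      FocS Θ A₁ → FocS Θ (.orP A₁ A₂)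
  | orP₂ {Θ : Multiset (PForm At)} {A₁ A₂ : PForm At} :
      FocS Θ A₂ → FocS Θ (.orP A₁ A₂)
  | release {Θ : Multiset (PForm At)} {N : PForm At} :
      N.isNeg → UnfS Θ {N} → FocS Θ N
  | init {Θ : Multiset (PForm At)} {a : At} :
      PForm.neg a ∈ Θ → FocS Θ (.pos a)
/-- Unfocussed sequents `⊢ Θ ⇑ Γ` of Liang–Miller's LKF. -/
inductive UnfS {At : Type} : Multiset (PForm At) → Multiset (PForm At) → Prop
  | andN {Θ Γ : Multiset (PForm At)} {A₁ A₂ : PForm At} :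
      UnfS Θ (A₁ ::ₘ Γ) → UnfS Θ (A₂ ::ₘ Γ) → UnfS Θ (PForm.andN A₁ A₂ ::ₘ Γ)
  | orN {Θ Γ : Multiset (PForm At)} {A₁ A₂ : PForm At} :
      UnfS Θ (A₁ ::ₘ A₂ ::ₘ Γ) → UnfS Θ (PForm.orN A₁ A₂ ::ₘ Γ)
  | store {Θ Γ : Multiset (PForm At)} {P : PForm At} :
      (P.isPos ∨ ∃ a : At, P = .neg a) → UnfS (P ::ₘ Θ) Γ → UnfS Θ (P ::ₘ Γ)
  | decide {Θ : Multiset (PForm At)} {P : PForm At} :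
      P ∈ Θ → P.isPos → FocS Θ P → UnfS Θ 0
end

/-- Focussed derivability equals the one-step synchronous phase: `⊢ Θ ⇓ A` iff
some positive decomposition `Γ ⊩⁺ A` has all its negative formulae derivable
unfocussed and all its positive atoms `a` with `ā ∈ Θ`. -/
theorem focS_iff_one_step {At : Type} (Θ : Multiset (PForm At)) (A : PForm At) :
    FocS Θ A ↔
      ∃ Γ : Multiset (PForm At), DecP Γ A ∧
        (∀ N ∈ Γ, N.isNeg → UnfS Θ {N}) ∧
        (∀ a : At, PForm.pos a ∈ Γ → PForm.neg a ∈ Θ) := by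
  constructor
  · intro h
    induction A generalizing Θ with
    | pos a => cases h with
      | init hmem =>
        refine ⟨{_}, DecP.atom _, ?_, ?_⟩
        · intro N hN hneg; rw [Multiset.mem_singleton] at hN; subst hN; cases hneg
        · intro a ha; rw [Multiset.mem_singleton] at ha; cases ha; exact hmem
      | release hneg _ => cases hneg
    | neg a => cases h with
      | release hneg hu =>
        refine ⟨{_}, DecP.shift hneg, ?_, ?_⟩
        · intro N hN _; rw [Multiset.mem_singleton] at hN; subst hN; exact hu
        · intro a ha; rw [Multiset.mem_singleton] at ha; cases ha
    | andP A₁ A₂ ih1 ih2 => cases h with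
      | andP h1 h2 =>
        obtain ⟨Γ₁, d1, n1, p1⟩ := ih1 Θ h1
        obtain ⟨Γ₂, d2, n2, p2⟩ := ih2 Θ h2
        refine ⟨Γ₁ + Γ₂, DecP.andP d1 d2, ?_, ?_⟩
        · intro N hN; rcases Multiset.mem_add.1 hN with hh | hh
          · exact n1 N hh
          · exact n2 N hh
        · intro a ha; rcases Multiset.mem_add.1 ha with hh | hh
          · exact p1 a hh
          · exact p2 a hh
      | release hneg _ => cases hneg
    | orP A₁ A₂ ih1 ih2 => cases h with
      | orP₁ h1 => obtain ⟨Γ, d, n, p⟩ := ih1 Θ h1; exact ⟨Γ, DecP.orP₁ d, n, p⟩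
      | orP₂ h2 => obtain ⟨Γ, d, n, p⟩ := ih2 Θ h2; exact ⟨Γ, DecP.orP₂ d, n, p⟩
      | release hneg _ => cases hneg
    | andN A₁ A₂ _ _ => cases h with
      | release hneg hu =>
        refine ⟨{_}, DecP.shift hneg, ?_, ?_⟩
        · intro N hN _; rw [Multiset.mem_singleton] at hN; subst hN; exact hu
        · intro a ha; rw [Multiset.mem_singleton] at ha; cases ha
    | orN A₁ A₂ _ _ => cases h with
      | release hneg hu =>
        refine ⟨{_}, DecP.shift hneg, ?_, ?_⟩
        · intro N hN _; rw [Multiset.mem_singleton] at hN; subst hN; exact hu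
        · intro a ha; rw [Multiset.mem_singleton] at ha; cases ha
  · rintro ⟨Γ, d, hn, hp⟩
    induction d with
    | shift hneg =>
      exact FocS.release hneg (hn _ (Multiset.mem_singleton_self _) hneg)
    | atom a =>
      exact FocS.init (hp a (Multiset.mem_singleton_self _))
    | andP d1 d2 ih1 ih2 =>
      refine FocS.andP (ih1 ?_ ?_) (ih2 ?_ ?_)
      · intro N h hN; exact hn N (Multiset.mem_add.2 (Or.inl h)) hN
      · intro a h; exact hp a (Multiset.mem_add.2 (Or.inl h))
      · intro N h hN; exact hn N (Multiset.mem_add.2 (Or.inr h)) hN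
      · intro a h; exact hp a (Multiset.mem_add.2 (Or.inr h))
    | orP₁ d ih => exact FocS.orP₁ (ih hn hp)
    | orP₂ d ih => exact FocS.orP₂ (ih hn hp)
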